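/- arXiv:math/0407321 — 2 statements merged into one kernel-verified Lean document; each statement's English description precedes it below -/
import Mathlib

section
/- In the Dynnikov monoid DS, presented by generators a_i, b_i, c_i, d_i (i ∈ Z/3) subject to d_0 d_1 d_2 = 1, b_i d_i = d_i b_i = 1, the relations a_i = a_{i+1} d_{i-1}, b_i = a_{i-1} c_{i+1}, c_i = b_{i-1} c_{i+1}, d_i = a_{i+1} c_{i-1}, the commutation relations (d_i c_i) w = w (d_i c_i) for w ∈ {c_{i+1}, b_i d_{i+1} d_i}, and u v = v u for u ∈ {a_i b_i, b_{i-1} d_i d_{i-1} b_i} and v ∈ {a_{i+1}, b_{i+1}, c_{i+1}, b_i d_{i+1} d_i}, the element b_{i+1} commutes with d_i c_i for every i ∈ Z/3. -/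
/-- The 12-letter alphabet `{a_i, b_i, c_i, d_i : i ∈ ℤ/3}`. -/
inductive Letter : Type
  | a (i : ZMod 3)
  | b (i : ZMod 3)
  | c (i : ZMod 3)
  | d (i : ZMod 3)

/-- A single letter as an element of the free monoid. -/
def g (x : Letter) : FreeMonoid Letter := FreeMonoid.of x

/-- The defining relations (1)-(3), (7), (8) of the Dynnikov monoid `DS`. -/
inductive rel : FreeMonoid Letter → FreeMonoid Letter → Prop
  | r1 : rel (g (.d 0) * g (.d 1) * g (.d 2)) 1
  | r2a (i : ZMod 3) : rel (g (.b i) * g (.d i)) 1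
  | r2b (i : ZMod 3) : rel (g (.d i) * g (.b i)) 1
  | r3a (i : ZMod 3) : rel (g (.a i)) (g (.a (i + 1)) * g (.d (i - 1)))
  | r3b (i : ZMod 3) : rel (g (.b i)) (g (.a (i - 1)) * g (.c (i + 1)))
  | r3c (i : ZMod 3) : rel (g (.c i)) (g (.b (i - 1)) * g (.c (i + 1)))
  | r3d (i : ZMod 3) : rel (g (.d i)) (g (.a (i + 1)) * g (.c (i - 1)))
  | r7 (i : ZMod 3) (w : FreeMonoid Letter)
      (hw : w = g (.c (i + 1)) ∨ w = g (.b i) * g (.d (i + 1)) * g (.d i)) :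
      rel (g (.d i) * g (.c i) * w) (w * (g (.d i) * g (.c i)))
  | r8 (i : ZMod 3) (u v : FreeMonoid Letter)
      (hu : u = g (.a i) * g (.b i) ∨ u = g (.b (i - 1)) * g (.d i) * g (.d (i - 1)) * g (.b i))
      (hv : v = g (.a (i + 1)) ∨ v = g (.b (i + 1)) ∨ v = g (.c (i + 1)) ∨
            v = g (.b i) * g (.d (i + 1)) * g (.d i)) :
      rel (u * v) (v * u)

namespace DSAux

/-- The quotient map. -/
def f : FreeMonoid Letter →* (conGen rel).Quotient := (conGen rel).mk'

def A (i : ZMod 3) : (conGen rel).Quotient := f (g (.a i))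
def Bb (i : ZMod 3) : (conGen rel).Quotient := f (g (.b i))
def C (i : ZMod 3) : (conGen rel).Quotient := f (g (.c i))
def D (i : ZMod 3) : (conGen rel).Quotient := f (g (.d i))

lemma base {x y : FreeMonoid Letter} (h : rel x y) : f x = f y :=
  Con.eq _ |>.2 (ConGen.Rel.of _ _ h)

lemma h1 : D 0 * D 1 * D 2 = 1 := by
  have := base rel.r1
  simp only [map_mul, map_one] at this; exact this

lemma h2a (i : ZMod 3) : Bb i * D i = 1 := by
  have := base (rel.r2a i); simp only [map_mul, map_one] at this; exact this

lemma h2b (i : ZMod 3) : D i * Bb i = 1 := by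
  have := base (rel.r2b i); simp only [map_mul, map_one] at this; exact this

lemma h3a (i : ZMod 3) : A i = A (i + 1) * D (i - 1) := by
  have := base (rel.r3a i); simp only [map_mul] at this; exact this

lemma h3b (i : ZMod 3) : Bb i = A (i - 1) * C (i + 1) := by
  have := base (rel.r3b i); simp only [map_mul] at this; exact this

lemma h3c (i : ZMod 3) : C i = Bb (i - 1) * C (i + 1) := by
  have := base (rel.r3c i); simp only [map_mul] at this; exact this

lemma h7 (i : ZMod 3) : D i * C i * C (i + 1) = C (i + 1) * (D i * C i) := by
  have := base (rel.r7 i (g (.c (i + 1))) (Or.inl rfl))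
  simp only [map_mul] at this; exact this

lemma h8b (i : ZMod 3) :
    (A i * Bb i) * Bb (i + 1) = Bb (i + 1) * (A i * Bb i) := by
  have := base (rel.r8 i (g (.a i) * g (.b i)) (g (.b (i + 1)))
    (Or.inl rfl) (Or.inr (Or.inl rfl)))
  simp only [map_mul] at this; exact this

lemma h8c (i : ZMod 3) :
    (A i * Bb i) * C (i + 1) = C (i + 1) * (A i * Bb i) := by
  have := base (rel.r8 i (g (.a i) * g (.b i)) (g (.c (i + 1)))
    (Or.inl rfl) (Or.inr (Or.inr (Or.inl rfl))))
  simp only [map_mul] at this; exact this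

/-- uniqueness of right inverse of `D j`. -/
lemma invu (j : ZMod 3) (w : (conGen rel).Quotient) (h : D j * w = 1) : w = Bb j := by
  calc w = (Bb j * D j) * w := by rw [h2a, one_mul]
    _ = Bb j * (D j * w) := mul_assoc _ _ _
    _ = Bb j := by rw [h, mul_one]

lemma rot (i : ZMod 3) : D i * (D (i + 1) * D (i + 2)) = 1 := by
  have hcase : ∀ j : ZMod 3, j = 0 ∨ j = 1 ∨ j = 2 := by decide
  have e1 : D 0 * (D 1 * D 2) = 1 := by rw [← mul_assoc]; exact h1
  have h12 : D 1 * D 2 = Bb 0 := invu 0 _ e1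
  have e2 : D 1 * (D 2 * D 0) = 1 := by
    rw [← mul_assoc, h12, h2a]
  have h20 : D 2 * D 0 = Bb 1 := invu 1 _ e2
  have e3 : D 2 * (D 0 * D 1) = 1 := by
    rw [← mul_assoc, h20, h2a]
  rcases hcase i with h | h | h <;> subst h <;> norm_num <;>
    first
      | exact e1
      | exact e2
      | exact e3

lemma dd (i : ZMod 3) : D (i + 1) * D (i + 2) = Bb i := invu i _ (rot i)

-- index helpers
lemma z1 (i : ZMod 3) : i + 1 + 1 = i + 2 := by ring
lemma z2 (i : ZMod 3) : i + 1 + 2 = i := by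
  have : ∀ j : ZMod 3, j + 1 + 2 = j := by decide
  exact this i
lemma z3 (i : ZMod 3) : i + 2 + 1 = i := by
  have : ∀ j : ZMod 3, j + 2 + 1 = j := by decide
  exact this i
lemma z4 (i : ZMod 3) : i + 2 + 2 = i + 1 := by
  have : ∀ j : ZMod 3, j + 2 + 2 = j + 1 := by decide
  exact this i
lemma z5 (i : ZMod 3) : i - 1 = i + 2 := by
  have : ∀ j : ZMod 3, j - 1 = j + 2 := by decide
  exact this i
lemma z6 (i : ZMod 3) : i + 1 - 1 = i := by ring

/-- `b_{i+1} = a_i c_{i+2}` -/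
lemma L1 (i : ZMod 3) : Bb (i + 1) = A i * C (i + 2) := by
  have := h3b (i + 1)
  rwa [z6, z1] at this

/-- `c_{i+2} = d_i c_{i+1}` -/
lemma L2 (i : ZMod 3) : C (i + 2) = D i * C (i + 1) := by
  have h := h3c (i + 1)
  rw [z6, z1] at h
  rw [h, ← mul_assoc, h2b, one_mul]

/-- `d_{i+2} d_i = b_{i+1}` -/
lemma L3' (i : ZMod 3) : D (i + 2) * D i = Bb (i + 1) := by
  have := dd (i + 1)
  rwa [z1, z2] at this

/-- `a_i d_i = a_{i+1} b_{i+1}` -/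
lemma L3 (i : ZMod 3) : A i * D i = A (i + 1) * Bb (i + 1) := by
  rw [h3a i, z5, mul_assoc, L3']

/-- `d_i d_{i+1} = b_{i+2}` -/
lemma L4' (i : ZMod 3) : D i * D (i + 1) = Bb (i + 2) := by
  have := dd (i + 2)
  rwa [z3, z4] at this

/-- `c_i = d_{i+1} c_{i+2}` -/
lemma L4'' (i : ZMod 3) : C i = D (i + 1) * C (i + 2) := by
  have h := h3c (i + 2)
  rw [show i + 2 - 1 = i + 1 from by rw [z5, z4], z3] at h
  rw [h, ← mul_assoc, h2b, one_mul]

/-- `d_i c_i = b_{i+2} c_{i+2}` -/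
lemma L4 (i : ZMod 3) : D i * C i = Bb (i + 2) * C (i + 2) := by
  rw [L4'' i, ← mul_assoc, L4']

/-- `a_{i+1} b_{i+1}` commutes with `d_i c_i`. -/
lemma L6 (i : ZMod 3) :
    (A (i + 1) * Bb (i + 1)) * (D i * C i) = (D i * C i) * (A (i + 1) * Bb (i + 1)) := by
  have cb : (A (i + 1) * Bb (i + 1)) * Bb (i + 2) = Bb (i + 2) * (A (i + 1) * Bb (i + 1)) := by
    have := h8b (i + 1); rwa [z1] at this
  have cc : (A (i + 1) * Bb (i + 1)) * C (i + 2) = C (i + 2) * (A (i + 1) * Bb (i + 1)) := by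
    have := h8c (i + 1); rwa [z1] at this
  rw [L4, ← mul_assoc, cb, mul_assoc, cc, ← mul_assoc]

lemma key (i : ZMod 3) :
    Bb (i + 1) * (D i * C i) = (D i * C i) * Bb (i + 1) := by
  calc Bb (i + 1) * (D i * C i)
      = (A i * (D i * C (i + 1))) * (D i * C i) := by rw [← L2, ← L1]
    _ = (A i * D i) * (C (i + 1) * (D i * C i)) := by
        simp only [mul_assoc]
    _ = (A i * D i) * (D i * C i * C (i + 1)) := by rw [← h7]
    _ = (A (i + 1) * Bb (i + 1)) * (D i * C i * C (i + 1)) := by rw [L3]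
    _ = ((A (i + 1) * Bb (i + 1)) * (D i * C i)) * C (i + 1) := by simp only [mul_assoc]
    _ = ((D i * C i) * (A (i + 1) * Bb (i + 1))) * C (i + 1) := by rw [L6]
    _ = (D i * C i) * ((A i * D i) * C (i + 1)) := by rw [← L3, mul_assoc]
    _ = (D i * C i) * (A i * (D i * C (i + 1))) := by rw [mul_assoc (A i)]
    _ = (D i * C i) * Bb (i + 1) := by rw [← L2, ← L1]

end DSAux

/-- In the Dynnikov monoid `DS`, the element `b_{i+1}` commutes with `d_i c_i`. -/
theorem b_commutes_dc (i : ZMod 3) :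
    (conGen rel).mk' (g (.b (i + 1)) * (g (.d i) * g (.c i))) =
      (conGen rel).mk' ((g (.d i) * g (.c i)) * g (.b (i + 1))) := by
  have := DSAux.key i
  simp only [DSAux.Bb, DSAux.D, DSAux.C, DSAux.f] at this
  simpa only [map_mul] using this
end

section
/- In the Dynnikov monoid DS (with relations (1)-(3),(7),(8) of the paper), setting t_i = b_{i+1} d_{i-1} d_{i+1} b_{i-1}, the twisting relations d_{i+1} b_{i-1} = b_{i-1} d_{i+1} t_i and b_{i+1} d_{i-1} = t_i d_{i-1} b_{i+1} hold for all i ∈ Z/3. -/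
/-- `t_i = b_{i+1} d_{i-1} d_{i+1} b_{i-1}`. -/
def t (i : ZMod 3) : FreeMonoid Letter :=
  g (.b (i + 1)) * g (.d (i - 1)) * g (.d (i + 1)) * g (.b (i - 1))

theorem conGen_mk'_eq_of_rel {M : Type*} [MulOneClass M] {r : M → M → Prop} {x y : M}
    (h : r x y) : (conGen r).mk' x = (conGen r).mk' y :=
  (Con.eq _).2 (ConGen.Rel.of x y h)

def dUnit (j : ZMod 3) : (conGen rel).Quotientˣ where
  val := (conGen rel).mk' (g (.d j))
  inv := (conGen rel).mk' (g (.b j))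
  val_inv := by rw [← map_mul, ← map_one (conGen rel).mk']; exact conGen_mk'_eq_of_rel (.r2b j)
  inv_val := by rw [← map_mul, ← map_one (conGen rel).mk']; exact conGen_mk'_eq_of_rel (.r2a j)

theorem mk'_d_eq_dUnit (j : ZMod 3) : (conGen rel).mk' (g (.d j)) = dUnit j := rfl

theorem mk'_b_eq_dUnit_inv (j : ZMod 3) : (conGen rel).mk' (g (.b j)) = ↑(dUnit j)⁻¹ := rfl

/-- Twisting relations (27): `d_{i+1} b_{i-1} = b_{i-1} d_{i+1} t_i` and
`b_{i+1} d_{i-1} = t_i d_{i-1} b_{i+1}` hold in `DS`. -/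
theorem twisting_27 (i : ZMod 3) :
    (conGen rel).mk' (g (.d (i + 1)) * g (.b (i - 1))) =
      (conGen rel).mk' (g (.b (i - 1)) * g (.d (i + 1)) * t i) ∧
    (conGen rel).mk' (g (.b (i + 1)) * g (.d (i - 1))) =
      (conGen rel).mk' (t i * g (.d (i - 1)) * g (.b (i + 1))) := by
  simp only [t, map_mul, mk'_d_eq_dUnit, mk'_b_eq_dUnit_inv]
  constructor <;> norm_cast <;> group
end
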